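/- Every average-price game on a finite graph is determined and both players have optimal positional strategies: for every vertex v, the infimum over positional strategies μ of Min of the supremum over all strategies χ of Max of A_Min(v,μ,χ) equals the supremum over positional strategies χ of Max of the infimum over all strategies μ of Min of A_Max(v,μ,χ), and this common quantity equals both the upper value inf_μ sup_χ A_Min(v,μ,χ) and the lower value sup_χ inf_μ A_Max(v,μ,χ). -/

import Mathlib

noncomputable section

attribute [local instance] Classical.propDecidable

/-- A two-player (Min/Max) game arena with real-valued step costs. -/
structure Arena (Conf Move : Type) where
  Tr : Conf → Move → Conf → Prop
  cost : Conf → Move → ℝ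
  IsMin : Conf → Prop

namespace Arena

variable {Conf Move : Type}

/-- A finite run in the arena. -/
structure FinRun (G : Arena Conf Move) where
  n : ℕ
  q : Fin (n + 1) → Conf
  m : Fin n → Move
  valid : ∀ i : Fin n, G.Tr (q i.castSucc) (m i) (q i.succ)

/-- The last configuration of a finite run. -/
def FinRun.last {G : Arena Conf Move} (r : G.FinRun) : Conf := r.q (Fin.last r.n)

/-- The first configuration of a finite run. -/
def FinRun.first {G : Arena Conf Move} (r : G.FinRun) : Conf := r.q 0

/-- The trivial run consisting of a single configuration. -/
def single (G : Arena Conf Move) (q0 : Conf) : G.FinRun :=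
  ⟨0, fun _ => q0, Fin.elim0, fun i => i.elim0⟩

/-- Extending a finite run by one transition. -/
def FinRun.extend {G : Arena Conf Move} (r : G.FinRun) (mv : Move) (q' : Conf)
    (h : G.Tr r.last mv q') : G.FinRun where
  n := r.n + 1
  q := Fin.snoc r.q q'
  m := Fin.snoc r.m mv
  valid := by
    intro i
    induction i using Fin.lastCases with
    | last =>
        have h1 : (Fin.snoc r.q q' : Fin (r.n + 1 + 1) → Conf) (Fin.last r.n).castSucc = r.last := by
          rw [Fin.snoc_castSucc]; rfl
        have h2 : (Fin.snoc r.q q' : Fin (r.n + 1 + 1) → Conf) (Fin.last r.n).succ = q' := by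
          rw [Fin.succ_last, Fin.snoc_last]
        have h3 : (Fin.snoc r.m mv : Fin (r.n + 1) → Move) (Fin.last r.n) = mv := Fin.snoc_last _ _
        rw [h1, h2, h3]; exact h
    | cast j =>
        have h1 : (Fin.snoc r.q q' : Fin (r.n + 1 + 1) → Conf) j.castSucc.castSucc = r.q j.castSucc :=
          Fin.snoc_castSucc _ _ _
        have h2 : (Fin.snoc r.q q' : Fin (r.n + 1 + 1) → Conf) j.castSucc.succ = r.q j.succ := by
          rw [Fin.succ_castSucc, Fin.snoc_castSucc]
        have h3 : (Fin.snoc r.m mv : Fin (r.n + 1) → Move) j.castSucc = r.m j := Fin.snoc_castSucc _ _ _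
        rw [h1, h2, h3]; exact r.valid j

/-- Strategies of player Min: mappings from finite runs to moves that are
available whenever the last configuration belongs to Min. -/
def MinStrategy (G : Arena Conf Move) : Type :=
  {σ : G.FinRun → Move // ∀ r : G.FinRun, G.IsMin r.last → ∃ q', G.Tr r.last (σ r) q'}

/-- Strategies of player Max. -/
def MaxStrategy (G : Arena Conf Move) : Type :=
  {σ : G.FinRun → Move // ∀ r : G.FinRun, ¬ G.IsMin r.last → ∃ q', G.Tr r.last (σ r) q'}

/-- A strategy is positional if its choice depends only on the last configuration. -/
def Positional {G : Arena Conf Move} (σ : G.FinRun → Move) : Prop :=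
  ∀ r r' : G.FinRun, r.last = r'.last → σ r = σ r'

/-- The finite prefixes of the unique play from `q0` in which Min uses `μ`
and Max uses `χ`. -/
def play (G : Arena Conf Move) (μ : G.MinStrategy) (χ : G.MaxStrategy) (q0 : Conf) :
    ℕ → G.FinRun
  | 0 => G.single q0
  | n + 1 =>
    let r := G.play μ χ q0 n
    if h : G.IsMin r.last then
      r.extend (μ.1 r) (Classical.choose (μ.2 r h)) (Classical.choose_spec (μ.2 r h))
    else
      r.extend (χ.1 r) (Classical.choose (χ.2 r h)) (Classical.choose_spec (χ.2 r h))

/-- Total cost (e.g. total time) of a finite run. -/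
def FinRun.time {G : Arena Conf Move} (r : G.FinRun) : ℝ :=
  ∑ i : Fin r.n, G.cost (r.q i.castSucc) (r.m i)

/-- Payoff of player Min (to be minimised): limsup of average cost. -/
def AMin (G : Arena Conf Move) (q0 : Conf) (μ : G.MinStrategy) (χ : G.MaxStrategy) : ℝ :=
  Filter.limsup (fun n : ℕ => (G.play μ χ q0 n).time / n) Filter.atTop

/-- Payoff of player Max (to be maximised): liminf of average cost. -/
def AMax (G : Arena Conf Move) (q0 : Conf) (μ : G.MinStrategy) (χ : G.MaxStrategy) : ℝ :=
  Filter.liminf (fun n : ℕ => (G.play μ χ q0 n).time / n) Filter.atTop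

/-- Upper value of the game at `q0`. -/
def upperVal (G : Arena Conf Move) (q0 : Conf) : ℝ :=
  ⨅ μ : G.MinStrategy, ⨆ χ : G.MaxStrategy, G.AMin q0 μ χ

/-- Lower value of the game at `q0`. -/
def lowerVal (G : Arena Conf Move) (q0 : Conf) : ℝ :=
  ⨆ χ : G.MaxStrategy, ⨅ μ : G.MinStrategy, G.AMax q0 μ χ

/-- The value of the game at `q0` (meaningful when the game is determined). -/
def val (G : Arena Conf Move) (q0 : Conf) : ℝ := G.upperVal q0

end Arena

/-- The arena of an average-price game on a finite directed graph `(V, E)`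
with price function `price` and vertex partition given by `VMin`. -/
def priceArena (V : Type) (E : V → V → Prop) (price : V → V → ℤ) (VMin : Set V) :
    Arena V V where
  Tr := fun u w u' => E u w ∧ u' = w
  cost := fun u w => (price u w : ℝ)
  IsMin := fun u => u ∈ VMin


/-!
Vanishing discount. For `0 ≤ t < 1` the Shapley operator of the `t`-discounted game is a
contraction, so the discounted game has a value `f t` together with positional moves attaining
the local optima. By pigeonhole one positional map `g` is optimal for `t` arbitrarily close
to `1`. Following `g` from a vertex traces a lasso, so `f t` is a rational function of `t` with
a simple pole at `1`: `f t = ν / (1 - t) + d + o(1)`. In the limit, the discounted optimality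
conditions become the mean-payoff optimality equations for the value `ν` and the bias `d`,
with `g` optimal for both players. If Min follows `g`, then `ν` never increases along the play
and, once it is constant, `d` telescopes the prices, so the limsup of the average price is at
most `ν v` whatever Max does; symmetrically Max following `g` secures a liminf of at least
`ν v`. These two positional guarantees force all four values to equal `ν v`.
-/

open Filter Topology Finset

def cesaroMean (x : ℕ → ℝ) (n : ℕ) : ℝ := (∑ i ∈ range n, x i) / n

section Cesaro

variable {x : ℕ → ℝ}

lemma abs_cesaroMean_le {M : ℝ} (hx : ∀ n, |x n| ≤ M) (n : ℕ) : |cesaroMean x n| ≤ M := by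
  rcases n.eq_zero_or_pos with rfl | hn
  · simpa [cesaroMean] using (abs_nonneg _).trans (hx 0)
  rw [cesaroMean, abs_div, Nat.abs_cast, div_le_iff₀ (by exact_mod_cast hn)]
  calc |∑ i ∈ range n, x i| ≤ ∑ i ∈ range n, |x i| := abs_sum_le_sum_abs _ _
    _ ≤ ∑ _i ∈ range n, M := sum_le_sum fun i _ => hx i
    _ = M * n := by rw [sum_const, card_range, nsmul_eq_mul, mul_comm]

lemma isBoundedUnder_abs_cesaroMean {M : ℝ} (hx : ∀ n, |x n| ≤ M) :
    IsBoundedUnder (· ≤ ·) atTop fun n => |cesaroMean x n| :=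
  isBoundedUnder_of ⟨M, abs_cesaroMean_le hx⟩

lemma cesaroMean_neg (x : ℕ → ℝ) (n : ℕ) : cesaroMean (fun i => -x i) n = -cesaroMean x n := by
  simp only [cesaroMean, sum_neg_distrib, neg_div]

lemma eventually_cesaroMean_le {b : ℕ → ℝ} {m K : ℝ} (hb : ∀ n, |b n| ≤ K)
    (h : ∀ᶠ n in atTop, x n ≤ m + b n - b (n + 1)) {ε : ℝ} (hε : 0 < ε) :
    ∀ᶠ n in atTop, cesaroMean x n ≤ m + ε := by
  obtain ⟨N, hN⟩ := eventually_atTop.1 h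
  set C := ∑ i ∈ range N, (x i - m) + b N
  have hsum : ∀ n ≥ N, ∑ i ∈ range n, x i ≤ n * m + C - b n := by
    intro n hn
    induction n, hn using Nat.le_induction with
    | base => simp only [C, sum_sub_distrib, sum_const, card_range, nsmul_eq_mul]; linarith
    | succ n hn ih => rw [sum_range_succ]; push_cast; linarith [hN n hn]
  have hC : Tendsto (fun n : ℕ => (C + K) / n) atTop (𝓝 0) :=
    tendsto_const_div_atTop_nhds_zero_nat _
  filter_upwards [eventually_ge_atTop (max N 1), hC.eventually (gt_mem_nhds hε)] with n hn hCn
  have hpos : (0 : ℝ) < n := by exact_mod_cast (le_max_right N 1).trans hn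
  rw [cesaroMean, div_le_iff₀ hpos]
  linarith [(div_lt_iff₀ hpos).1 hCn, hsum n ((le_max_left N 1).trans hn), (abs_le.1 (hb n)).1]

lemma Antitone.exists_eventually_eq_of_finite_range {a : ℕ → ℝ} (ha : Antitone a)
    (hfin : (Set.range a).Finite) : ∃ m ≤ a 0, ∀ᶠ n in atTop, a n = m := by
  obtain ⟨_, ⟨N, rfl⟩, hmin⟩ := Set.exists_min_image _ id hfin (Set.range_nonempty a)
  exact ⟨a N, hmin _ ⟨0, rfl⟩, eventually_atTop.2
    ⟨N, fun n hn => le_antisymm (ha hn) (hmin _ ⟨n, rfl⟩)⟩⟩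

lemma eventually_cesaroMean_le_of_potential {a b : ℕ → ℝ} {K : ℝ} (ha : Antitone a)
    (hfin : (Set.range a).Finite) (hb : ∀ n, |b n| ≤ K)
    (h : ∀ n, a (n + 1) = a n → x n ≤ a n + b n - b (n + 1)) {ε : ℝ} (hε : 0 < ε) :
    ∀ᶠ n in atTop, cesaroMean x n ≤ a 0 + ε := by
  obtain ⟨m, hm, hev⟩ := ha.exists_eventually_eq_of_finite_range hfin
  have hx : ∀ᶠ n in atTop, x n ≤ m + b n - b (n + 1) := by
    filter_upwards [hev, (tendsto_add_atTop_nat 1).eventually hev] with n hn hn1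
    exact hn ▸ h n (hn1.trans hn.symm)
  filter_upwards [eventually_cesaroMean_le hb hx hε] with n hn using by linarith

lemma eventually_le_cesaroMean_of_potential {a b : ℕ → ℝ} {K : ℝ} (ha : Monotone a)
    (hfin : (Set.range a).Finite) (hb : ∀ n, |b n| ≤ K)
    (h : ∀ n, a (n + 1) = a n → a n + b n - b (n + 1) ≤ x n) {ε : ℝ} (hε : 0 < ε) :
    ∀ᶠ n in atTop, a 0 - ε ≤ cesaroMean x n := by
  have hneg := eventually_cesaroMean_le_of_potential (x := fun n => -x n) (a := fun n => -a n)
    (b := fun n => -b n) ha.neg (Set.range_comp Neg.neg a ▸ hfin.image Neg.neg)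
    (by simpa using hb) (fun n hn => by linarith [h n (neg_inj.1 hn)]) hε
  filter_upwards [hneg] with n hn
  rw [cesaroMean_neg] at hn
  linarith

lemma limsup_cesaroMean_le_of_potential {a b : ℕ → ℝ} {M K : ℝ} (hx : ∀ n, |x n| ≤ M)
    (ha : Antitone a) (hfin : (Set.range a).Finite) (hb : ∀ n, |b n| ≤ K)
    (h : ∀ n, a (n + 1) = a n → x n ≤ a n + b n - b (n + 1)) :
    limsup (cesaroMean x) atTop ≤ a 0 :=
  le_of_forall_pos_le_add fun _ hε => limsup_le_of_le
    (isBoundedUnder_le_abs.1 (isBoundedUnder_abs_cesaroMean hx)).2.isCoboundedUnder_le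
    (eventually_cesaroMean_le_of_potential ha hfin hb h hε)

lemma le_liminf_cesaroMean_of_potential {a b : ℕ → ℝ} {M K : ℝ} (hx : ∀ n, |x n| ≤ M)
    (ha : Monotone a) (hfin : (Set.range a).Finite) (hb : ∀ n, |b n| ≤ K)
    (h : ∀ n, a (n + 1) = a n → a n + b n - b (n + 1) ≤ x n) :
    a 0 ≤ liminf (cesaroMean x) atTop :=
  le_of_forall_pos_sub_le fun _ hε => le_liminf_of_le
    (isBoundedUnder_le_abs.1 (isBoundedUnder_abs_cesaroMean hx)).1.isCoboundedUnder_ge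
    (eventually_le_cesaroMean_of_potential ha hfin hb h hε)

end Cesaro

section Bounds

variable {x : ℕ → ℝ} {M : ℝ} (hx : ∀ n, |x n| ≤ M)
include hx

lemma limsup_cesaroMean_le : limsup (cesaroMean x) atTop ≤ M :=
  limsup_le_of_le (isBoundedUnder_le_abs.1 (isBoundedUnder_abs_cesaroMean hx)).2.isCoboundedUnder_le
    (.of_forall fun n => (abs_le.1 (abs_cesaroMean_le hx n)).2)

lemma neg_le_liminf_cesaroMean : -M ≤ liminf (cesaroMean x) atTop :=
  le_liminf_of_le (isBoundedUnder_le_abs.1 (isBoundedUnder_abs_cesaroMean hx)).1.isCoboundedUnder_ge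
    (.of_forall fun n => (abs_le.1 (abs_cesaroMean_le hx n)).1)

lemma liminf_le_limsup_cesaroMean : liminf (cesaroMean x) atTop ≤ limsup (cesaroMean x) atTop :=
  liminf_le_limsup (isBoundedUnder_le_abs.1 (isBoundedUnder_abs_cesaroMean hx)).1
    (isBoundedUnder_le_abs.1 (isBoundedUnder_abs_cesaroMean hx)).2

end Bounds

section Laurent

lemma tendsto_one_sub_mul_of_tendsto_sub_div {l : Filter ℝ} (hl : l ≤ 𝓝[<] 1) {x : ℝ → ℝ}
    {α δ : ℝ} (hx : Tendsto (fun t => x t - α / (1 - t)) l (𝓝 δ)) :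
    Tendsto (fun t => (1 - t) * x t) l (𝓝 α) := by
  have h1 : Tendsto (fun t : ℝ => 1 - t) l (𝓝 0) := by
    simpa using ((tendsto_nhdsWithin_of_tendsto_nhds tendsto_id).mono_left hl).const_sub 1
  have hne : ∀ᶠ t in l, 1 - t ≠ 0 :=
    hl (eventually_nhdsWithin_of_forall fun t (ht : t < 1) => by linarith)
  have := (h1.mul hx).add_const α
  rw [zero_mul, zero_add] at this
  refine this.congr' ?_
  filter_upwards [hne] with t ht
  field_simp
  ring

/-- Writing `1 - t ^ p = (1 - t) * S t` with `S t = ∑ i < p, t ^ i`, the remainder is minus a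
difference quotient at `1` of `N = p * R - R 1 * S`, divided by `p * S t`; and `N 1 = 0`. -/
lemma exists_tendsto_div_one_sub_pow_sub {R : ℝ → ℝ} (hR : DifferentiableAt ℝ R 1) {p : ℕ}
    (hp : 0 < p) :
    ∃ d, Tendsto (fun t => R t / (1 - t ^ p) - R 1 / p / (1 - t)) (𝓝[<] 1) (𝓝 d) := by
  set S : ℝ → ℝ := fun t => ∑ i ∈ range p, t ^ i
  set N : ℝ → ℝ := fun t => p * R t - R 1 * S t
  have hS1 : S 1 = p := by simp [S]
  have hN1 : N 1 = 0 := by simp [N, hS1]; ring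
  have hSc : Continuous S := by fun_prop
  have hN : DifferentiableAt ℝ N 1 := by fun_prop
  have hlim :
      Tendsto (fun t => -slope N 1 t / (p * S t)) (𝓝[<] 1) (𝓝 (-deriv N 1 / (p * p))) := by
    have := (hasDerivAt_iff_tendsto_slope.1 hN.hasDerivAt).mono_left
      (nhdsWithin_mono _ fun t (ht : t < 1) => ht.ne)
    refine this.neg.div (tendsto_const_nhds.mul ?_) ?_
    · rw [← hS1]; exact hSc.continuousAt.tendsto.mono_left nhdsWithin_le_nhds
    · positivity
  refine ⟨_, hlim.congr' ?_⟩
  filter_upwards [Ioo_mem_nhdsLT (show (0 : ℝ) < 1 by norm_num)] with t ⟨ht0, ht1⟩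
  have hSpos : 0 < S t := sum_pos (fun i _ => pow_pos ht0 i) (nonempty_range_iff.2 hp.ne')
  have ht1' : t - 1 ≠ 0 := by linarith
  have hfac : 1 - t ^ p = (1 - t) * S t := (mul_neg_geom_sum t p).symm
  rw [hfac, slope_def_field, hN1]
  simp only [N]
  field_simp
  ring

end Laurent

section Orbit

variable {V : Type*}

lemma exists_isPeriodicPt_iterate [Finite V] (g : V → V) (u : V) :
    ∃ a p, 0 < p ∧ Function.IsPeriodicPt g p (g^[a] u) := by
  obtain ⟨i, j, hij, h⟩ := Finite.exists_ne_map_eq_of_infinite fun n => g^[n] u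
  wlog hlt : i < j generalizing i j
  · exact this j i hij.symm h.symm (lt_of_le_of_ne (not_lt.1 hlt) hij.symm)
  refine ⟨i, j - i, Nat.sub_pos_of_lt hlt, ?_⟩
  rw [Function.IsPeriodicPt, Function.IsFixedPt, ← Function.iterate_add_apply,
    Nat.sub_add_cancel hlt.le]
  exact h.symm

variable {g : V → V} {c : V → V → ℝ} {t : ℝ} {F : V → ℝ}

lemma eq_sum_add_pow_mul_iterate (hF : ∀ u, F u = c u (g u) + t * F (g u)) (u : V) (n : ℕ) :
    F u = ∑ i ∈ range n, t ^ i * c (g^[i] u) (g^[i + 1] u) + t ^ n * F (g^[n] u) := by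
  induction n with
  | zero => simp
  | succ n ih =>
    rw [ih, hF (g^[n] u), ← Function.iterate_succ_apply' g n u, sum_range_succ, pow_succ]
    ring

/-- Along a lasso-shaped orbit, `F u` is a rational function of `t` with denominator
`1 - t ^ p`, `p` the period of the cycle. -/
lemma exists_mul_one_sub_pow_eq [Finite V] (g : V → V) (c : V → V → ℝ) (u : V) :
    ∃ p > 0, ∃ R : ℝ → ℝ, Differentiable ℝ R ∧ ∀ (t : ℝ) (F : V → ℝ),
      (∀ u, F u = c u (g u) + t * F (g u)) → F u * (1 - t ^ p) = R t := by
  obtain ⟨a, p, hp, hper⟩ := exists_isPeriodicPt_iterate g u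
  set w := g^[a] u
  refine ⟨p, hp, fun t => (1 - t ^ p) * ∑ i ∈ range a, t ^ i * c (g^[i] u) (g^[i + 1] u) +
    t ^ a * ∑ i ∈ range p, t ^ i * c (g^[i] w) (g^[i + 1] w), by fun_prop, fun t F hF => ?_⟩
  have hu := eq_sum_add_pow_mul_iterate hF u a
  have hw := eq_sum_add_pow_mul_iterate hF w p
  rw [hper.eq] at hw
  linear_combination (1 - t ^ p) * hu + t ^ a * hw

end Orbit

lemma exists_tendsto_sub_div_of_recurrence {V : Type*} [Finite V] {g : V → V} {c : V → V → ℝ}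
    {l : Filter ℝ} (hl : l ≤ 𝓝[<] 1) {F : ℝ → V → ℝ}
    (hF : ∀ᶠ t in l, ∀ u, F t u = c u (g u) + t * F t (g u)) (u : V) :
    ∃ ν d : ℝ, Tendsto (fun t => F t u - ν / (1 - t)) l (𝓝 d) := by
  obtain ⟨p, hp, R, hR, hRF⟩ := exists_mul_one_sub_pow_eq g c u
  obtain ⟨d, hd⟩ := exists_tendsto_div_one_sub_pow_sub (hR 1) hp
  refine ⟨R 1 / p, d, (hd.mono_left hl).congr' ?_⟩
  filter_upwards [hF, hl (Ioo_mem_nhdsLT one_pos)] with t ht ⟨ht0, ht1⟩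
  have hpow : 1 - t ^ p ≠ 0 := (sub_pos.2 (pow_lt_one₀ ht0.le ht1 hp.ne')).ne'
  rw [← hRF t (F t) ht, mul_div_cancel_right₀ _ hpow]

section LaurentComparison

variable {l : Filter ℝ} [l.NeBot] (hl : l ≤ 𝓝[<] 1) {x y : ℝ → ℝ} {α β δ ε c : ℝ}
include hl

/-- The hypotheses `hx`, `hy` say `x t = α / (1 - t) + δ + o(1)` and
`y t = β / (1 - t) + ε + o(1)` as `t → 1⁻`. -/
lemma le_of_laurent_of_eventually_le (hx : Tendsto (fun t => x t - α / (1 - t)) l (𝓝 δ))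
    (hy : Tendsto (fun t => y t - β / (1 - t)) l (𝓝 ε)) (h : ∀ᶠ t in l, x t ≤ c + t * y t) :
    α ≤ β ∧ (β = α → α + δ ≤ c + ε) := by
  have ht : Tendsto (fun t : ℝ => t) l (𝓝 1) :=
    (tendsto_nhdsWithin_of_tendsto_nhds tendsto_id).mono_left hl
  have hlt : ∀ᶠ t in l, t < 1 := hl self_mem_nhdsWithin
  constructor
  · have hrhs := ((ht.const_sub 1).mul_const c).add
      (ht.mul (tendsto_one_sub_mul_of_tendsto_sub_div hl hy))
    rw [sub_self, zero_mul, zero_add, one_mul] at hrhs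
    refine le_of_tendsto_of_tendsto (tendsto_one_sub_mul_of_tendsto_sub_div hl hx) hrhs ?_
    filter_upwards [h, hlt] with t hxy ht1
    nlinarith
  · rintro rfl
    have hrhs := ((ht.mul hy).const_add c).sub_const β
    rw [one_mul] at hrhs
    suffices δ ≤ c + ε - β by linarith
    refine le_of_tendsto_of_tendsto hx hrhs ?_
    filter_upwards [h, hlt] with t hxy ht1
    have : 1 - t ≠ 0 := by linarith
    have key : t * (y t - β / (1 - t)) = t * y t - β / (1 - t) + β := by field_simp; ring
    linarith

lemma ge_of_laurent_of_eventually_ge (hx : Tendsto (fun t => x t - α / (1 - t)) l (𝓝 δ))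
    (hy : Tendsto (fun t => y t - β / (1 - t)) l (𝓝 ε)) (h : ∀ᶠ t in l, c + t * y t ≤ x t) :
    β ≤ α ∧ (β = α → c + ε ≤ α + δ) := by
  have key := le_of_laurent_of_eventually_le hl (x := fun t => -x t) (y := fun t => -y t)
    (α := -α) (β := -β) (δ := -δ) (ε := -ε) (c := -c) (hx.neg.congr fun t => by ring)
    (hy.neg.congr fun t => by ring) (h.mono fun t ht => by linarith)
  exact ⟨neg_le_neg_iff.1 key.1, fun hβα => by linarith [key.2 (neg_inj.2 hβα)]⟩

end LaurentComparison

lemma Finset.abs_inf'_sub_inf'_le {ι : Type*} {s : Finset ι} (hs : s.Nonempty) {F G : ι → ℝ}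
    {r : ℝ} (h : ∀ i ∈ s, |F i - G i| ≤ r) : |s.inf' hs F - s.inf' hs G| ≤ r := by
  rw [abs_sub_le_iff, sub_le_comm, sub_le_comm (b := s.inf' hs F)]
  constructor <;> refine le_inf' _ _ fun i hi => ?_
  · linarith [inf'_le F hi, (abs_sub_le_iff.1 (h i hi)).1]
  · linarith [inf'_le G hi, (abs_sub_le_iff.1 (h i hi)).2]

lemma Finset.abs_sup'_sub_sup'_le {ι : Type*} {s : Finset ι} (hs : s.Nonempty) {F G : ι → ℝ}
    {r : ℝ} (h : ∀ i ∈ s, |F i - G i| ≤ r) : |s.sup' hs F - s.sup' hs G| ≤ r := by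
  rw [abs_sub_le_iff, sub_le_iff_le_add, sub_le_iff_le_add]
  constructor <;> refine sup'_le _ _ fun i hi => ?_
  · linarith [le_sup' G hi, (abs_sub_le_iff.1 (h i hi)).1]
  · linarith [le_sup' F hi, (abs_sub_le_iff.1 (h i hi)).2]

section DiscountedGame

variable {V : Type*} (E : V → V → Prop) (VMin : Set V) (c : V → V → ℝ)

structure IsDiscountedSolution (t : ℝ) (f : V → ℝ) (g : V → V) : Prop where
  edge : ∀ u, E u (g u)
  eq_step : ∀ u, f u = c u (g u) + t * f (g u)
  le_of_mem : ∀ u ∈ VMin, ∀ w, E u w → f u ≤ c u w + t * f w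
  ge_of_not_mem : ∀ u ∉ VMin, ∀ w, E u w → c u w + t * f w ≤ f u

variable [Fintype V] {E} (hE : ∀ v, ∃ w, E v w)
include hE

lemma filter_nonempty_of_forall_exists (u : V) : (univ.filter (E u)).Nonempty :=
  let ⟨w, hw⟩ := hE u
  ⟨w, mem_filter.2 ⟨mem_univ w, hw⟩⟩

def shapley (t : ℝ) (f : V → ℝ) (u : V) : ℝ :=
  if u ∈ VMin then
    (univ.filter (E u)).inf' (filter_nonempty_of_forall_exists hE u) fun w => c u w + t * f w
  else (univ.filter (E u)).sup' (filter_nonempty_of_forall_exists hE u) fun w => c u w + t * f w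

lemma contractingWith_shapley {t : ℝ} (ht0 : 0 ≤ t) (ht1 : t < 1) :
    ContractingWith ⟨t, ht0⟩ (shapley VMin c hE t) := by
  refine ⟨by exact_mod_cast ht1, LipschitzWith.of_dist_le_mul fun f f' => ?_⟩
  rw [dist_pi_le_iff (by positivity)]
  intro u
  have h : ∀ w, |(c u w + t * f w) - (c u w + t * f' w)| ≤ t * dist f f' := fun w => by
    rw [add_sub_add_left_eq_sub, ← mul_sub, abs_mul, abs_of_nonneg ht0, ← Real.dist_eq]
    exact mul_le_mul_of_nonneg_left (dist_le_pi_dist f f' w) ht0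
  rw [Real.dist_eq, shapley, shapley]
  split_ifs
  · exact abs_inf'_sub_inf'_le _ fun w _ => h w
  · exact abs_sup'_sub_sup'_le _ fun w _ => h w

lemma exists_isDiscountedSolution {t : ℝ} (ht0 : 0 ≤ t) (ht1 : t < 1) :
    ∃ f g, IsDiscountedSolution E VMin c t f g := by
  set f := ContractingWith.fixedPoint _ (contractingWith_shapley VMin c hE ht0 ht1)
  have hf : ∀ u, shapley VMin c hE t f u = f u := congrFun (ContractingWith.fixedPoint_isFixedPt _)
  have hsucc : ∀ u w, w ∈ univ.filter (E u) ↔ E u w := fun u w => by simp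
  have hg : ∀ u, ∃ w, E u w ∧ f u = c u w + t * f w := by
    intro u
    rw [← hf u, shapley]
    split_ifs
    · obtain ⟨w, hw, heq⟩ := exists_mem_eq_inf' (filter_nonempty_of_forall_exists hE u)
        fun w => c u w + t * f w
      exact ⟨w, (hsucc u w).1 hw, heq⟩
    · obtain ⟨w, hw, heq⟩ := exists_mem_eq_sup' (filter_nonempty_of_forall_exists hE u)
        fun w => c u w + t * f w
      exact ⟨w, (hsucc u w).1 hw, heq⟩
  choose g hgE hg using hg
  refine ⟨f, g, hgE, hg, fun u hu w hw => ?_, fun u hu w hw => ?_⟩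
  · rw [← hf u, shapley, if_pos hu]
    exact inf'_le _ ((hsucc u w).2 hw)
  · rw [← hf u, shapley, if_neg hu]
    exact le_sup' (fun w => c u w + t * f w) ((hsucc u w).2 hw)

end DiscountedGame

section OptimalPotential

variable {V : Type*} (E : V → V → Prop) (VMin : Set V) (c : V → V → ℝ)

/-- Optimality equations of the mean-payoff game: `ν` is the value, `d` a bias, and `g`
picks moves that are optimal for both players. -/
structure IsOptimalPotential (ν d : V → ℝ) (g : V → V) : Prop where
  edge : ∀ u, E u (g u)
  value_eq : ∀ u, ν (g u) = ν u
  bias_eq : ∀ u, ν u + d u = c u (g u) + d (g u)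
  le_of_mem : ∀ u ∈ VMin, ∀ w, E u w → ν u ≤ ν w ∧ (ν w = ν u → ν u + d u ≤ c u w + d w)
  ge_of_not_mem : ∀ u ∉ VMin, ∀ w, E u w → ν w ≤ ν u ∧ (ν w = ν u → c u w + d w ≤ ν u + d u)

variable {E VMin c}

lemma IsOptimalPotential.of_tendsto {l : Filter ℝ} [l.NeBot] (hl : l ≤ 𝓝[<] 1)
    {F : ℝ → V → ℝ} {g : V → V} (hF : ∀ᶠ t in l, IsDiscountedSolution E VMin c t (F t) g)
    {ν d : V → ℝ} (hlim : ∀ u, Tendsto (fun t => F t u - ν u / (1 - t)) l (𝓝 (d u))) :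
    IsOptimalPotential E VMin c ν d g := by
  have hle (u : V) := le_of_laurent_of_eventually_le hl (hlim u) (hlim (g u))
    (hF.mono fun t ht => (ht.eq_step u).le)
  have hge (u : V) := ge_of_laurent_of_eventually_ge hl (hlim u) (hlim (g u))
    (hF.mono fun t ht => (ht.eq_step u).ge)
  have hν (u : V) : ν (g u) = ν u := le_antisymm (hge u).1 (hle u).1
  refine ⟨hF.exists.choose_spec.edge, hν, fun u => le_antisymm ((hle u).2 (hν u))
    ((hge u).2 (hν u)), fun u hu w hw => ?_, fun u hu w hw => ?_⟩
  · exact le_of_laurent_of_eventually_le hl (hlim u) (hlim w)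
      (hF.mono fun t ht => ht.le_of_mem u hu w hw)
  · exact ge_of_laurent_of_eventually_ge hl (hlim u) (hlim w)
      (hF.mono fun t ht => ht.ge_of_not_mem u hu w hw)

variable (VMin c)

theorem exists_isOptimalPotential [Fintype V] (hE : ∀ v, ∃ w, E v w) :
    ∃ ν d g, IsOptimalPotential E VMin c ν d g := by
  have hsol : ∀ t ∈ Set.Ico (0 : ℝ) 1, ∃ f g, IsDiscountedSolution E VMin c t f g :=
    fun t ht => exists_isDiscountedSolution VMin c hE ht.1 ht.2
  -- lets `choose!` extend `G` beyond `[0, 1)`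
  have : Nonempty (V → V) := ⟨id⟩
  choose! F G hFG using hsol
  obtain ⟨g, hg⟩ : ∃ g, ∃ᶠ t in 𝓝[<] (1 : ℝ), G t = g := by
    by_contra! h
    obtain ⟨t, ht⟩ := (eventually_all.2 h).exists
    exact ht (G t) rfl
  set l := 𝓝[<] (1 : ℝ) ⊓ 𝓟 {t | G t = g}
  have : l.NeBot := frequently_iff_neBot.1 hg
  have hl : l ≤ 𝓝[<] 1 := inf_le_left
  have hFg : ∀ᶠ t in l, IsDiscountedSolution E VMin c t (F t) g := by
    filter_upwards [hl (Ico_mem_nhdsLT one_pos), mem_inf_of_right (mem_principal_self _)]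
      with t ht hGt
    exact hGt ▸ hFG t ht
  choose ν d hd using exists_tendsto_sub_div_of_recurrence hl (hFg.mono fun t ht => ht.eq_step)
  exact ⟨ν, d, g, .of_tendsto hl hFg hd⟩

end OptimalPotential

namespace Arena

variable {Conf Move : Type} {G : Arena Conf Move}

def position (G : Arena Conf Move) (μ : G.MinStrategy) (χ : G.MaxStrategy) (q0 : Conf) (n : ℕ) :
    Conf :=
  (G.play μ χ q0 n).last

lemma FinRun.last_extend (r : G.FinRun) (mv : Move) (q' : Conf) (h : G.Tr r.last mv q') :
    (r.extend mv q' h).last = q' := by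
  simp [FinRun.extend, FinRun.last]

lemma FinRun.time_extend (r : G.FinRun) (mv : Move) (q' : Conf) (h : G.Tr r.last mv q') :
    (r.extend mv q' h).time = r.time + G.cost r.last mv := by
  show ∑ i : Fin (r.n + 1), G.cost (Fin.snoc (α := fun _ => Conf) r.q q' i.castSucc)
    (Fin.snoc (α := fun _ => Move) r.m mv i) = _
  simp [Fin.sum_univ_castSucc, FinRun.time, FinRun.last]

lemma exists_move_play_succ (μ : G.MinStrategy) (χ : G.MaxStrategy) (q0 : Conf) (n : ℕ) :
    ∃ mv, G.Tr (G.position μ χ q0 n) mv (G.position μ χ q0 (n + 1)) ∧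
      (G.play μ χ q0 (n + 1)).time = (G.play μ χ q0 n).time + G.cost (G.position μ χ q0 n) mv ∧
      (G.IsMin (G.position μ χ q0 n) → mv = μ.1 (G.play μ χ q0 n)) ∧
      (¬ G.IsMin (G.position μ χ q0 n) → mv = χ.1 (G.play μ χ q0 n)) := by
  simp only [position, play]
  split_ifs with h
  · exact ⟨_, by rw [FinRun.last_extend]; exact Classical.choose_spec _,
      FinRun.time_extend .., fun _ => rfl, fun h' => absurd h h'⟩
  · exact ⟨_, by rw [FinRun.last_extend]; exact Classical.choose_spec _,
      FinRun.time_extend .., fun h' => absurd h' h, fun _ => rfl⟩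

def MinStrategy.ofMap (σ : Conf → Move) (hσ : ∀ q, ∃ q', G.Tr q (σ q) q') : G.MinStrategy :=
  ⟨fun r => σ r.last, fun r _ => hσ r.last⟩

def MaxStrategy.ofMap (σ : Conf → Move) (hσ : ∀ q, ∃ q', G.Tr q (σ q) q') : G.MaxStrategy :=
  ⟨fun r => σ r.last, fun r _ => hσ r.last⟩

lemma MinStrategy.positional_ofMap (σ : Conf → Move) (hσ : ∀ q, ∃ q', G.Tr q (σ q) q') :
    Positional (MinStrategy.ofMap σ hσ).1 :=
  fun _ _ h => congrArg σ h

lemma MaxStrategy.positional_ofMap (σ : Conf → Move) (hσ : ∀ q, ∃ q', G.Tr q (σ q) q') :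
    Positional (MaxStrategy.ofMap σ hσ).1 :=
  fun _ _ h => congrArg σ h

end Arena

namespace priceArena

open Arena

variable {V : Type} {E : V → V → Prop} {price : V → V → ℤ} {VMin : Set V}

local notation "𝒜" => priceArena V E price VMin

section Play

variable (μ : (priceArena V E price VMin).MinStrategy)
  (χ : (priceArena V E price VMin).MaxStrategy) (v : V)

lemma edge_position_succ (n : ℕ) : E ((𝒜).position μ χ v n) ((𝒜).position μ χ v (n + 1)) := by
  obtain ⟨mv, ⟨hE, rfl⟩, -⟩ := exists_move_play_succ μ χ v n
  exact hE

lemma position_succ_of_mem {n : ℕ} (h : (𝒜).position μ χ v n ∈ VMin) :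
    (𝒜).position μ χ v (n + 1) = μ.1 ((𝒜).play μ χ v n) := by
  obtain ⟨mv, ⟨-, rfl⟩, -, hμ, -⟩ := exists_move_play_succ μ χ v n
  exact hμ h

lemma position_succ_of_not_mem {n : ℕ} (h : (𝒜).position μ χ v n ∉ VMin) :
    (𝒜).position μ χ v (n + 1) = χ.1 ((𝒜).play μ χ v n) := by
  obtain ⟨mv, ⟨-, rfl⟩, -, -, hχ⟩ := exists_move_play_succ μ χ v n
  exact hχ h

lemma time_play (n : ℕ) : ((𝒜).play μ χ v n).time =
    ∑ i ∈ range n, (price ((𝒜).position μ χ v i) ((𝒜).position μ χ v (i + 1)) : ℝ) := by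
  induction n with
  | zero => exact sum_eq_zero fun i _ => i.elim0
  | succ n ih =>
    obtain ⟨mv, ⟨-, rfl⟩, htime, -⟩ := exists_move_play_succ μ χ v n
    rw [htime, ih, sum_range_succ]
    rfl

lemma AMin_eq : (𝒜).AMin v μ χ =
    limsup (cesaroMean fun i => (price ((𝒜).position μ χ v i) ((𝒜).position μ χ v (i + 1)) : ℝ))
      atTop := by
  simp only [AMin, time_play]
  rfl

lemma AMax_eq : (𝒜).AMax v μ χ =
    liminf (cesaroMean fun i => (price ((𝒜).position μ χ v i) ((𝒜).position μ χ v (i + 1)) : ℝ))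
      atTop := by
  simp only [AMax, time_play]
  rfl

end Play

variable [Finite V]

lemma exists_abs_price_le : ∃ M, ∀ u w : V, |(price u w : ℝ)| ≤ M :=
  let ⟨M, hM⟩ := Finite.exists_le fun p : V × V => |(price p.1 p.2 : ℝ)|
  ⟨M, fun u w => hM (u, w)⟩

lemma AMax_le_AMin (μ : (𝒜).MinStrategy) (χ : (𝒜).MaxStrategy) (v : V) :
    (𝒜).AMax v μ χ ≤ (𝒜).AMin v μ χ := by
  obtain ⟨M, hM⟩ := exists_abs_price_le (price := price)
  rw [AMax_eq, AMin_eq]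
  exact liminf_le_limsup_cesaroMean fun _ => hM _ _

lemma bddAbove_range_AMin (μ : (𝒜).MinStrategy) (v : V) :
    BddAbove (Set.range fun χ => (𝒜).AMin v μ χ) := by
  obtain ⟨M, hM⟩ := exists_abs_price_le (price := price)
  refine ⟨M, ?_⟩
  rintro _ ⟨χ, rfl⟩
  dsimp only
  rw [AMin_eq]
  exact limsup_cesaroMean_le fun _ => hM _ _

lemma bddBelow_range_AMax (χ : (𝒜).MaxStrategy) (v : V) :
    BddBelow (Set.range fun μ => (𝒜).AMax v μ χ) := by
  obtain ⟨M, hM⟩ := exists_abs_price_le (price := price)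
  refine ⟨-M, ?_⟩
  rintro _ ⟨μ, rfl⟩
  dsimp only
  rw [AMax_eq]
  exact neg_le_liminf_cesaroMean fun _ => hM _ _

variable {ν d : V → ℝ} {g : V → V}
  (hp : IsOptimalPotential E VMin (fun u w => (price u w : ℝ)) ν d g)
include hp

lemma _root_.IsOptimalPotential.AMin_le (μ : (𝒜).MinStrategy) (hμ : ∀ r, μ.1 r = g r.last)
    (χ : (𝒜).MaxStrategy) (v : V) : (𝒜).AMin v μ χ ≤ ν v := by
  obtain ⟨M, hM⟩ := exists_abs_price_le (price := price)
  obtain ⟨K, hK⟩ := Finite.exists_le fun u => |d u|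
  rw [AMin_eq]
  set Q := (𝒜).position μ χ v
  have hstep (n : ℕ) : ν (Q (n + 1)) ≤ ν (Q n) ∧ (ν (Q (n + 1)) = ν (Q n) →
      (price (Q n) (Q (n + 1)) : ℝ) ≤ ν (Q n) + d (Q n) - d (Q (n + 1))) := by
    by_cases h : Q n ∈ VMin
    · have hQ : Q (n + 1) = g (Q n) := (position_succ_of_mem μ χ v h).trans (hμ _)
      rw [hQ, hp.value_eq]
      exact ⟨le_rfl, fun _ => by linarith [hp.bias_eq (Q n)]⟩
    · have hmax := hp.ge_of_not_mem _ h _ (edge_position_succ μ χ v n)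
      exact ⟨hmax.1, fun hn => by linarith [hmax.2 hn]⟩
  exact limsup_cesaroMean_le_of_potential (fun _ => hM _ _)
    (antitone_nat_of_succ_le fun n => (hstep n).1)
    ((Set.finite_range ν).subset (Set.range_comp_subset_range Q ν)) (fun _ => hK _)
    fun n => (hstep n).2

lemma _root_.IsOptimalPotential.le_AMax (χ : (𝒜).MaxStrategy) (hχ : ∀ r, χ.1 r = g r.last)
    (μ : (𝒜).MinStrategy) (v : V) : ν v ≤ (𝒜).AMax v μ χ := by
  obtain ⟨M, hM⟩ := exists_abs_price_le (price := price)
  obtain ⟨K, hK⟩ := Finite.exists_le fun u => |d u|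
  rw [AMax_eq]
  set Q := (𝒜).position μ χ v
  have hstep (n : ℕ) : ν (Q n) ≤ ν (Q (n + 1)) ∧ (ν (Q (n + 1)) = ν (Q n) →
      ν (Q n) + d (Q n) - d (Q (n + 1)) ≤ (price (Q n) (Q (n + 1)) : ℝ)) := by
    by_cases h : Q n ∈ VMin
    · have hmin := hp.le_of_mem _ h _ (edge_position_succ μ χ v n)
      exact ⟨hmin.1, fun hn => by linarith [hmin.2 hn]⟩
    · have hQ : Q (n + 1) = g (Q n) := (position_succ_of_not_mem μ χ v h).trans (hχ _)
      rw [hQ, hp.value_eq]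
      exact ⟨le_rfl, fun _ => by linarith [hp.bias_eq (Q n)]⟩
  exact le_liminf_cesaroMean_of_potential (fun _ => hM _ _)
    (monotone_nat_of_le_succ fun n => (hstep n).1)
    ((Set.finite_range ν).subset (Set.range_comp_subset_range Q ν)) (fun _ => hK _)
    fun n => (hstep n).2

end priceArena

section Minimax

variable {α β : Type*} {A B : α → β → ℝ} {x : ℝ}

theorem minimax_eq_of_guarantees (P : α → Prop) (Q : β → Prop) (hBA : ∀ a b, B a b ≤ A a b)
    (hA : ∀ a, BddAbove (Set.range (A a))) (hB : ∀ b, BddBelow (Set.range fun a => B a b))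
    {a₀ : α} (ha₀ : P a₀) (hA₀ : ∀ b, A a₀ b ≤ x) {b₀ : β} (hb₀ : Q b₀)
    (hB₀ : ∀ a, x ≤ B a b₀) :
    (⨅ a : {a // P a}, ⨆ b, A a b) = x ∧ (⨆ b : {b // Q b}, ⨅ a, B a b) = x ∧
      (⨅ a, ⨆ b, A a b) = x ∧ (⨆ b, ⨅ a, B a b) = x := by
  have : Nonempty α := ⟨a₀⟩
  have : Nonempty β := ⟨b₀⟩
  have upper_ge (a : α) : x ≤ ⨆ b, A a b := (hB₀ a).trans ((hBA a b₀).trans (le_ciSup (hA a) b₀))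
  have lower_le (b : β) : ⨅ a, B a b ≤ x := (ciInf_le (hB b) a₀).trans ((hBA a₀ b).trans (hA₀ b))
  have upper_a₀ : ⨆ b, A a₀ b ≤ x := ciSup_le hA₀
  have lower_b₀ : x ≤ ⨅ a, B a b₀ := le_ciInf hB₀
  refine ⟨?_, ?_, ?_, ?_⟩
  · have : Nonempty {a // P a} := ⟨⟨a₀, ha₀⟩⟩
    exact ciInf_eq_of_forall_ge_of_forall_gt_exists_lt (fun a => upper_ge a)
      fun _ hw => ⟨⟨a₀, ha₀⟩, upper_a₀.trans_lt hw⟩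
  · have : Nonempty {b // Q b} := ⟨⟨b₀, hb₀⟩⟩
    exact ciSup_eq_of_forall_le_of_forall_lt_exists_gt (fun b => lower_le b)
      fun _ hw => ⟨⟨b₀, hb₀⟩, hw.trans_le lower_b₀⟩
  · exact ciInf_eq_of_forall_ge_of_forall_gt_exists_lt upper_ge
      fun _ hw => ⟨a₀, upper_a₀.trans_lt hw⟩
  · exact ciSup_eq_of_forall_le_of_forall_lt_exists_gt lower_le
      fun _ hw => ⟨b₀, hw.trans_le lower_b₀⟩

end Minimax

/-- Every average-price game on a finite graph is determined and both players
have optimal positional strategies. -/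
theorem averagePriceGame_positionally_determined
    (V : Type) [Fintype V] (E : V → V → Prop) (hE : ∀ v : V, ∃ w : V, E v w)
    (price : V → V → ℤ) (VMin : Set V) (v : V) :
    (⨅ μ : {μ : (priceArena V E price VMin).MinStrategy // Arena.Positional μ.1},
        ⨆ χ : (priceArena V E price VMin).MaxStrategy,
          (priceArena V E price VMin).AMin v μ.1 χ) =
      (⨆ χ : {χ : (priceArena V E price VMin).MaxStrategy // Arena.Positional χ.1},
        ⨅ μ : (priceArena V E price VMin).MinStrategy,
          (priceArena V E price VMin).AMax v μ χ.1) ∧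
    (⨅ μ : {μ : (priceArena V E price VMin).MinStrategy // Arena.Positional μ.1},
        ⨆ χ : (priceArena V E price VMin).MaxStrategy,
          (priceArena V E price VMin).AMin v μ.1 χ) =
      (priceArena V E price VMin).upperVal v ∧
    (⨆ χ : {χ : (priceArena V E price VMin).MaxStrategy // Arena.Positional χ.1},
        ⨅ μ : (priceArena V E price VMin).MinStrategy,
          (priceArena V E price VMin).AMax v μ χ.1) =
      (priceArena V E price VMin).lowerVal v := by
  obtain ⟨ν, d, g, hp⟩ := exists_isOptimalPotential VMin (fun u w => (price u w : ℝ)) hE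
  have hg : ∀ u, ∃ u', (priceArena V E price VMin).Tr u (g u) u' :=
    fun u => ⟨g u, hp.edge u, rfl⟩
  obtain ⟨hMin, hMax, hUpper, hLower⟩ := minimax_eq_of_guarantees (x := ν v)
    (fun μ => Arena.Positional μ.1) (fun χ => Arena.Positional χ.1)
    (priceArena.AMax_le_AMin · · v) (priceArena.bddAbove_range_AMin · v)
    (priceArena.bddBelow_range_AMax · v) (Arena.MinStrategy.positional_ofMap g hg)
    (hp.AMin_le _ (fun _ => rfl) · v) (Arena.MaxStrategy.positional_ofMap g hg)
    (hp.le_AMax _ (fun _ => rfl) · v)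
  exact ⟨hMin.trans hMax.symm, hMin.trans hUpper.symm, hMax.trans hLower.symm⟩
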